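/- arXiv:math/0507106 — 2 statements merged into one kernel-verified Lean document; each statement's English description precedes it below -/
import Mathlib

section
/- Let H be a ℤ/2-graded supercommutative associative unital ℂ-algebra with odd linear operators Q, G₋ : H → H satisfying Q² = G₋² = QG₋ + G₋Q = 0, where Q satisfies the Leibniz rule Q(ab) = Q(a)b + (−1)^{|a|}aQ(b); let H = H₀ ⊕ H₄ be a Hodge decomposition with QH₀ = G₋H₀ = 0 and H₄ having a homogeneous basis consisting of quadruples e_α, Qe_α, G₋e_α, QG₋e_α; let G₊ be defined by G₊H₀ = 0, G₊e_α = G₊G₋e_α = 0, G₊Qe_α = e_α, G₊QG₋e_α = G₋e_α; and let ∫ : H → ℂ be an even linear integral with ∫Q(a)b = (−1)^{|a|+1}∫aQ(b) and ∫G₊(a)b = (−1)^{|a|}∫aG₊(b) for homogeneous a. Assume H₀ is contained in the even part of H, is finite-dimensional with basis e₁, …, e_s, and that the Gram matrix g_{ij} = ∫ e_i e_j is invertible with inverse (g^{ij}). Then for all a, b, c, d ∈ H₀: Σ_{i,j} g^{ij} (∫ a b e_i)(∫ e_j c d) = ∫ abcd. In particular the left-hand side is invariant under interchanging b and c, which is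 the constant term (in the variables T) of the WDVV equation for the Barannikov–Kontsevich potential F₀^{sm}. -/
/-!
Closed elements of `H₄` are exact: on `H₄` the operator `QG₊ + G₊Q` is the identity (check it on
each quadruple), so `Qz = 0` gives `z = Q(G₊z)`. By the Stokes-type rule `∫ Q(u) y = ±∫ u Q(y)`,
exact elements integrate to zero against closed ones. Since `ab` and `cd` are closed, `∫ abcd`
only sees the `H₀`-component `x₀` of `ab`, and the sum over the inverse Gram matrix reproduces
`∫ x₀ cd` because `x₀ = Σᵢⱼ (∫ x₀ eᵢ) gⁱʲ eⱼ`.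
-/

open Matrix

section Gram

variable {R M : Type*} [CommRing R] [AddCommGroup M] [Module R M] {s : ℕ}

theorem sum_pairing_mul_gram_inv_eq {v : Fin s → M} {B : M →ₗ[R] M →ₗ[R] R}
    {g ginv : Matrix (Fin s) (Fin s) R} (hg : ∀ i j, g i j = B (v i) (v j)) (hginv : g * ginv = 1)
    (L : M →ₗ[R] R) {x : M} (hx : x ∈ Submodule.span R (Set.range v)) :
    ∑ i, ∑ j, ginv i j * B x (v i) * L (v j) = L x := by
  obtain ⟨p, rfl⟩ := (Submodule.mem_span_range_iff_exists_fun R).mp hx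
  have hpair : ∀ i, B (∑ k, p k • v k) (v i) = (p ᵥ* g) i := fun i => by
    simp [vecMul, dotProduct, hg]
  have hcoord : p ᵥ* g ᵥ* ginv = p := by rw [vecMul_vecMul, hginv, vecMul_one]
  calc ∑ i, ∑ j, ginv i j * B (∑ k, p k • v k) (v i) * L (v j)
      = ∑ j, (p ᵥ* g ᵥ* ginv) j * L (v j) := by
        simp only [hpair]
        rw [Finset.sum_comm]
        refine Finset.sum_congr rfl fun j _ => ?_
        rw [vecMul, dotProduct, Finset.sum_mul]
        exact Finset.sum_congr rfl fun i _ => by ring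
    _ = L (∑ k, p k • v k) := by simp [hcoord]

end Gram

section Hodge

variable {R H : Type*} [CommRing R] [Ring H] [Algebra R H]

theorem integral_Q_mul_eq_zero_of_Q_eq_zero {Heven Hodd : Submodule R H}
    (hgr : Heven ⊔ Hodd = ⊤) {Q : H →ₗ[R] H} {I : H →ₗ[R] R}
    (hIQ_e : ∀ a ∈ Heven, ∀ b : H, I (Q a * b) = - I (a * Q b))
    (hIQ_o : ∀ a ∈ Hodd, ∀ b : H, I (Q a * b) = I (a * Q b))
    (u : H) {y : H} (hy : Q y = 0) : I (Q u * y) = 0 := by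
  obtain ⟨ue, hue, uo, huo, rfl⟩ := Submodule.mem_sup.mp (hgr ▸ Submodule.mem_top : u ∈ Heven ⊔ Hodd)
  rw [map_add, add_mul, map_add, hIQ_e ue hue y, hIQ_o uo huo y, hy]
  simp

theorem homotopy_comp_subtype_eq_subtype {Q Gm Gp : H →ₗ[R] H} (hQ2 : Q ∘ₗ Q = 0)
    {H4 : Submodule R H} {ι : Type*} {e : ι → H} {b : Module.Basis (ι × Fin 4) R H4}
    (hb0 : ∀ α, (b (α, 0) : H) = e α)
    (hb1 : ∀ α, (b (α, 1) : H) = Q (e α))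
    (hb2 : ∀ α, (b (α, 2) : H) = Gm (e α))
    (hb3 : ∀ α, (b (α, 3) : H) = Q (Gm (e α)))
    (hGpe : ∀ α, Gp (e α) = 0)
    (hGpGme : ∀ α, Gp (Gm (e α)) = 0)
    (hGpQe : ∀ α, Gp (Q (e α)) = e α)
    (hGpQGme : ∀ α, Gp (Q (Gm (e α))) = Gm (e α)) :
    (Q ∘ₗ Gp + Gp ∘ₗ Q) ∘ₗ H4.subtype = H4.subtype := by
  have hQQ : ∀ z, Q (Q z) = 0 := fun z => LinearMap.congr_fun hQ2 z
  refine b.ext fun ⟨α, i⟩ => ?_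
  fin_cases i <;> simp [hb0, hb1, hb2, hb3, hGpe, hGpGme, hGpQe, hGpQGme, hQQ]

theorem exists_mem_integral_mul_eq_of_Q_eq_zero {Q : H →ₗ[R] H} {I : H →ₗ[R] R}
    {H0 H4 : Submodule R H} (hHodge : H0 ⊔ H4 = ⊤) (hQH0 : ∀ x ∈ H0, Q x = 0)
    (hexact : ∀ z ∈ H4, Q z = 0 → ∃ u, Q u = z)
    (hIQ : ∀ u y, Q y = 0 → I (Q u * y) = 0) {x : H} (hx : Q x = 0) :
    ∃ x0 ∈ H0, ∀ y, Q y = 0 → I (x * y) = I (x0 * y) := by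
  obtain ⟨x0, hx0, x4, hx4, rfl⟩ :=
    Submodule.mem_sup.mp (hHodge ▸ Submodule.mem_top : x ∈ H0 ⊔ H4)
  have hQx4 : Q x4 = 0 := by rwa [map_add, hQH0 x0 hx0, zero_add] at hx
  obtain ⟨u, rfl⟩ := hexact x4 hx4 hQx4
  exact ⟨x0, hx0, fun y hy => by rw [add_mul, map_add, hIQ u y hy, add_zero]⟩

end Hodge

theorem stmt_9_general
    {H : Type*} [Ring H] [Algebra ℂ H]
    (Heven Hodd : Submodule ℂ H) (hgr : IsCompl Heven Hodd)
    (hsc_ee : ∀ a ∈ Heven, ∀ b ∈ Heven, a * b = b * a)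
    (Q Gm : H →ₗ[ℂ] H)
    (hQ2 : Q ∘ₗ Q = 0)
    (hLeib_e : ∀ a ∈ Heven, ∀ b : H, Q (a * b) = Q a * b + a * Q b)
    (H0 H4 : Submodule ℂ H) (hHodge : IsCompl H0 H4)
    (hQH0 : ∀ x ∈ H0, Q x = 0)
    {ι : Type*} (e : ι → H)
    (b : Module.Basis (ι × Fin 4) ℂ H4)
    (hb0 : ∀ α, (b (α, 0) : H) = e α)
    (hb1 : ∀ α, (b (α, 1) : H) = Q (e α))
    (hb2 : ∀ α, (b (α, 2) : H) = Gm (e α))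
    (hb3 : ∀ α, (b (α, 3) : H) = Q (Gm (e α)))
    (Gp : H →ₗ[ℂ] H)
    (hGpe : ∀ α, Gp (e α) = 0)
    (hGpGme : ∀ α, Gp (Gm (e α)) = 0)
    (hGpQe : ∀ α, Gp (Q (e α)) = e α)
    (hGpQGme : ∀ α, Gp (Q (Gm (e α))) = Gm (e α))
    (I : H →ₗ[ℂ] ℂ)
    (hIQ_e : ∀ a ∈ Heven, ∀ b : H, I (Q a * b) = - I (a * Q b))
    (hIQ_o : ∀ a ∈ Hodd, ∀ b : H, I (Q a * b) = I (a * Q b))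
    (hH0even : H0 ≤ Heven)
    {s : ℕ} (v : Fin s → H)
    (bv : Module.Basis (Fin s) ℂ H0) (hbv : ∀ i, (bv i : H) = v i)
    (g ginv : Matrix (Fin s) (Fin s) ℂ)
    (hg : ∀ i j, g i j = I (v i * v j))
    (hginv : g * ginv = 1)
    :
    ∀ a ∈ H0, ∀ b ∈ H0, ∀ c ∈ H0, ∀ d ∈ H0,
      (∑ i, ∑ j, ginv i j * I (a * b * v i) * I (v j * c * d) = I (a * b * c * d)) ∧
      (∑ i, ∑ j, ginv i j * I (a * b * v i) * I (v j * c * d) =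
        ∑ i, ∑ j, ginv i j * I (a * c * v i) * I (v j * b * d)) := by
  have hexact : ∀ z ∈ H4, Q z = 0 → ∃ u, Q u = z := fun z hz hQz =>
    ⟨Gp z, by
      simpa [hQz] using LinearMap.congr_fun (homotopy_comp_subtype_eq_subtype hQ2 hb0 hb1 hb2 hb3
        hGpe hGpGme hGpQe hGpQGme) ⟨z, hz⟩⟩
  have hspan : H0 = Submodule.span ℂ (Set.range v) := by
    rw [show v = H0.subtype ∘ bv from funext fun i => (hbv i).symm, Set.range_comp,
      Submodule.span_image, bv.span_eq, Submodule.map_subtype_top]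
  have hQmul : ∀ x ∈ H0, ∀ y ∈ H0, Q (x * y) = 0 := fun x hx y hy => by
    rw [hLeib_e x (hH0even hx), hQH0 x hx, hQH0 y hy, zero_mul, mul_zero, add_zero]
  have key : ∀ a ∈ H0, ∀ b ∈ H0, ∀ c ∈ H0, ∀ d ∈ H0,
      ∑ i, ∑ j, ginv i j * I (a * b * v i) * I (v j * c * d) = I (a * b * c * d) := by
    intro a ha b hb c hc d hd
    obtain ⟨x0, hx0, hpair⟩ := exists_mem_integral_mul_eq_of_Q_eq_zero hHodge.sup_eq_top hQH0
      hexact (integral_Q_mul_eq_zero_of_Q_eq_zero hgr.sup_eq_top hIQ_e hIQ_o) (hQmul a ha b hb)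
    have hv : ∀ i, v i ∈ H0 := fun i => hbv i ▸ (bv i).2
    simp only [mul_assoc _ c d, hpair _ (hQH0 _ (hv _)), hpair _ (hQmul c hc d hd)]
    exact sum_pairing_mul_gram_inv_eq (B := (LinearMap.mul ℂ H).compr₂ I) hg hginv
      (I ∘ₗ LinearMap.mulRight ℂ (c * d)) (hspan ▸ hx0)
  intro a ha b hb c hc d hd
  refine ⟨key a ha b hb c hc d hd, ?_⟩
  rw [key a ha b hb c hc d hd, key a ha c hc b hb d hd, mul_assoc a b c, mul_assoc a c b,
    hsc_ee b (hH0even hb) c (hH0even hc)]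

theorem stmt_9
    {H : Type*} [Ring H] [Algebra ℂ H]
    (Heven Hodd : Submodule ℂ H) (hgr : IsCompl Heven Hodd)
    (h1e : (1 : H) ∈ Heven)
    (hmul_ee : ∀ a ∈ Heven, ∀ b ∈ Heven, a * b ∈ Heven)
    (hmul_eo : ∀ a ∈ Heven, ∀ b ∈ Hodd, a * b ∈ Hodd)
    (hmul_oe : ∀ a ∈ Hodd, ∀ b ∈ Heven, a * b ∈ Hodd)
    (hmul_oo : ∀ a ∈ Hodd, ∀ b ∈ Hodd, a * b ∈ Heven)
    (hsc_ee : ∀ a ∈ Heven, ∀ b ∈ Heven, a * b = b * a)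
    (hsc_eo : ∀ a ∈ Heven, ∀ b ∈ Hodd, a * b = b * a)
    (hsc_oo : ∀ a ∈ Hodd, ∀ b ∈ Hodd, a * b = -(b * a))
    (Q Gm : H →ₗ[ℂ] H)
    (hQo : ∀ x ∈ Heven, Q x ∈ Hodd) (hQo' : ∀ x ∈ Hodd, Q x ∈ Heven)
    (hGmo : ∀ x ∈ Heven, Gm x ∈ Hodd) (hGmo' : ∀ x ∈ Hodd, Gm x ∈ Heven)
    (hQ2 : Q ∘ₗ Q = 0) (hGm2 : Gm ∘ₗ Gm = 0) (hQGm : Q ∘ₗ Gm + Gm ∘ₗ Q = 0)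
    (hLeib_e : ∀ a ∈ Heven, ∀ b : H, Q (a * b) = Q a * b + a * Q b)
    (hLeib_o : ∀ a ∈ Hodd, ∀ b : H, Q (a * b) = Q a * b - a * Q b)
    (H0 H4 : Submodule ℂ H) (hHodge : IsCompl H0 H4)
    (hQH0 : ∀ x ∈ H0, Q x = 0) (hGmH0 : ∀ x ∈ H0, Gm x = 0)
    {ι : Type*} (e : ι → H)
    (he_hom : ∀ α, e α ∈ Heven ∨ e α ∈ Hodd)
    (b : Module.Basis (ι × Fin 4) ℂ H4)
    (hb0 : ∀ α, (b (α, 0) : H) = e α)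
    (hb1 : ∀ α, (b (α, 1) : H) = Q (e α))
    (hb2 : ∀ α, (b (α, 2) : H) = Gm (e α))
    (hb3 : ∀ α, (b (α, 3) : H) = Q (Gm (e α)))
    (Gp : H →ₗ[ℂ] H)
    (hGpo : ∀ x ∈ Heven, Gp x ∈ Hodd) (hGpo' : ∀ x ∈ Hodd, Gp x ∈ Heven)
    (hGpH0 : ∀ x ∈ H0, Gp x = 0)
    (hGpe : ∀ α, Gp (e α) = 0)
    (hGpGme : ∀ α, Gp (Gm (e α)) = 0)
    (hGpQe : ∀ α, Gp (Q (e α)) = e α)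
    (hGpQGme : ∀ α, Gp (Q (Gm (e α))) = Gm (e α))
    (I : H →ₗ[ℂ] ℂ) (hIeven : ∀ x ∈ Hodd, I x = 0)
    (hIQ_e : ∀ a ∈ Heven, ∀ b : H, I (Q a * b) = - I (a * Q b))
    (hIQ_o : ∀ a ∈ Hodd, ∀ b : H, I (Q a * b) = I (a * Q b))
    (hIGp_e : ∀ a ∈ Heven, ∀ b : H, I (Gp a * b) = I (a * Gp b))
    (hIGp_o : ∀ a ∈ Hodd, ∀ b : H, I (Gp a * b) = - I (a * Gp b))
    (hH0even : H0 ≤ Heven)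
    {s : ℕ} (v : Fin s → H)
    (bv : Module.Basis (Fin s) ℂ H0) (hbv : ∀ i, (bv i : H) = v i)
    (g ginv : Matrix (Fin s) (Fin s) ℂ)
    (hg : ∀ i j, g i j = I (v i * v j))
    (hginv : g * ginv = 1) (hginv' : ginv * g = 1)
    :
    ∀ a ∈ H0, ∀ b ∈ H0, ∀ c ∈ H0, ∀ d ∈ H0,
      (∑ i, ∑ j, ginv i j * I (a * b * v i) * I (v j * c * d) = I (a * b * c * d)) ∧
      (∑ i, ∑ j, ginv i j * I (a * b * v i) * I (v j * c * d) =
        ∑ i, ∑ j, ginv i j * I (a * c * v i) * I (v j * b * d)) :=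
  stmt_9_general Heven Hodd hgr hsc_ee Q Gm hQ2 hLeib_e H0 H4 hHodge hQH0 e b hb0 hb1 hb2 hb3 Gp
    hGpe hGpGme hGpQe hGpQGme I hIQ_e hIQ_o hH0even v bv hbv g ginv hg hginv
end

section
/- Let H be a ℤ/2-graded supercommutative associative unital ℂ-algebra with odd linear operators Q, G₋ : H → H satisfying Q² = G₋² = QG₋ + G₋Q = 0, a Hodge decomposition H = H₀ ⊕ H₄ where QH₀ = G₋H₀ = 0 and H₄ has a homogeneous basis consisting of quadruples e_α, Qe_α, G₋e_α, QG₋e_α, the odd operator G₊ defined by G₊H₀ = 0, G₊e_α = G₊G₋e_α = 0, G₊Qe_α = e_α, G₊QG₋e_α = G₋e_α, and an even linear integral ∫ : H → ℂ satisfying ∫G₋(a)b = (−1)^{|a|}∫aG₋(b) and ∫G₊(a)b = (−1)^{|a|}∫aG₊(b) for homogeneous a. Define the four-point function W(x,y,z,w) = ∫ xy·G₋G₊(zw) + ∫ xz·G₋G₊(yw) + ∫ xw·G₋G₊(yz). Then for all even x, y, z, w ∈ H, W(x,y,z,w) is invariant under every permutation of its four arguments. -/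
/-!
`G₊` anticommutes with `G₋`: on `H₀` both vanish, and on each quadruple
`e, Qe, G₋e, QG₋e` this follows from `G₋² = 0` and `G₋Q = -QG₋`. Hence `G₋G₊ = -G₊G₋`, and
moving first `G₋` (across the odd element `G₊c`) and then `G₊` (across the even element `c`)
through the integral shows that `∫ a·G₋G₊(c)` is symmetric in even `a, c`. Together with the
commutativity of even elements this makes `W` invariant under the adjacent transpositions,
which generate `S₄`.
-/

/-- The four-point function `W(x,y,z,w) = ∫xy·G₋G₊(zw) + ∫xz·G₋G₊(yw) + ∫xw·G₋G₊(yz)`. -/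
noncomputable def Wfun {H : Type*} [Ring H] [Algebra ℂ H]
    (I : H →ₗ[ℂ] ℂ) (Gm Gp : H →ₗ[ℂ] H) (x y z w : H) : ℂ :=
  I (x * y * Gm (Gp (z * w))) + I (x * z * Gm (Gp (y * w))) + I (x * w * Gm (Gp (y * z)))

open Equiv

theorem comp_perm_invariant_of_swap_castSucc_succ {α β : Type*} {n : ℕ}
    (f : (Fin (n + 1) → α) → β)
    (hf : ∀ v (i : Fin n), f (v ∘ swap i.castSucc i.succ) = f v)
    (σ : Perm (Fin (n + 1))) (v : Fin (n + 1) → α) : f (v ∘ σ) = f v := by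
  have hσ : σ ∈ Submonoid.closure (Set.range fun i : Fin n ↦ swap i.castSucc i.succ) :=
    Perm.mclosure_swap_castSucc_succ n ▸ Submonoid.mem_top σ
  induction hσ using Submonoid.closure_induction generalizing v with
  | mem _ hτ => obtain ⟨i, rfl⟩ := hτ; exact hf v i
  | one => rfl
  | mul σ τ _ _ ihσ ihτ => exact (ihτ (v ∘ σ)).trans (ihσ v)

section Anticommutation

variable {R M ι : Type*} [CommRing R] [AddCommGroup M] [Module R M]
  {Q Gm Gp : M →ₗ[R] M}

theorem LinearMap.eq_zero_of_isCompl {N : Type*} [AddCommGroup N] [Module R N]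
    {p q : Submodule R M} (h : IsCompl p q) {f : M →ₗ[R] N}
    (hp : f ∘ₗ p.subtype = 0) (hq : f ∘ₗ q.subtype = 0) : f = 0 :=
  (LinearMap.ofIsCompl_eq' h hp.symm hq.symm).symm.trans (LinearMap.ofIsCompl_zero h)

theorem anticomm_on_quadruple (hGm2 : Gm ∘ₗ Gm = 0) (hQGm : Q ∘ₗ Gm + Gm ∘ₗ Q = 0) {e : M}
    (hGpe : Gp e = 0) (hGpGme : Gp (Gm e) = 0) (hGpQe : Gp (Q e) = e)
    (hGpQGme : Gp (Q (Gm e)) = Gm e) :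
    ∀ v ∈ ({e, Q e, Gm e, Q (Gm e)} : Set M), Gm (Gp v) + Gp (Gm v) = 0 := by
  have hGmGm : ∀ v, Gm (Gm v) = 0 := fun v ↦ LinearMap.congr_fun hGm2 v
  have hGmQ : ∀ v, Gm (Q v) = -Q (Gm v) := fun v ↦
    eq_neg_of_add_eq_zero_right (LinearMap.congr_fun hQGm v)
  rintro v (rfl | rfl | rfl | rfl)
  · rw [hGpe, hGpGme, map_zero, add_zero]
  · rw [hGpQe, hGmQ, map_neg, hGpQGme, add_neg_cancel]
  · rw [hGpGme, hGmGm, map_zero, map_zero, add_zero]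
  · rw [hGpQGme, hGmGm, hGmQ, hGmGm, map_zero, neg_zero, map_zero, add_zero]

theorem anticomm_of_hodge (hGm2 : Gm ∘ₗ Gm = 0) (hQGm : Q ∘ₗ Gm + Gm ∘ₗ Q = 0)
    {H0 H4 : Submodule R M} (hHodge : IsCompl H0 H4)
    (hGmH0 : ∀ x ∈ H0, Gm x = 0) (hGpH0 : ∀ x ∈ H0, Gp x = 0)
    (e : ι → M) (b : Module.Basis (ι × Fin 4) R H4)
    (hb0 : ∀ α, (b (α, 0) : M) = e α) (hb1 : ∀ α, (b (α, 1) : M) = Q (e α))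
    (hb2 : ∀ α, (b (α, 2) : M) = Gm (e α)) (hb3 : ∀ α, (b (α, 3) : M) = Q (Gm (e α)))
    (hGpe : ∀ α, Gp (e α) = 0) (hGpGme : ∀ α, Gp (Gm (e α)) = 0)
    (hGpQe : ∀ α, Gp (Q (e α)) = e α) (hGpQGme : ∀ α, Gp (Q (Gm (e α))) = Gm (e α)) :
    Gm ∘ₗ Gp + Gp ∘ₗ Gm = 0 := by
  refine LinearMap.eq_zero_of_isCompl hHodge ?_ ?_
  · ext ⟨x, hx⟩
    simp [hGmH0 x hx, hGpH0 x hx]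
  · refine b.ext fun ⟨α, j⟩ ↦ ?_
    have hquad := anticomm_on_quadruple hGm2 hQGm (hGpe α) (hGpGme α) (hGpQe α) (hGpQGme α)
    fin_cases j <;> simp only [LinearMap.comp_apply, LinearMap.add_apply, LinearMap.zero_apply,
      Submodule.subtype_apply] <;> apply hquad <;> simp [hb0, hb1, hb2, hb3]

end Anticommutation

section Pairing

variable {R H N : Type*} [CommRing R] [Ring H] [Module R H] [AddCommGroup N] [Module R N]
  {I : H →ₗ[R] N} {Gm Gp : H →ₗ[R] H} {Heven Hodd : Submodule R H}

theorem integral_mul_Gm_Gp_symm (hcomm : ∀ a ∈ Heven, ∀ b ∈ Heven, a * b = b * a)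
    (hGm : ∀ x ∈ Hodd, Gm x ∈ Heven) (hGp : ∀ x ∈ Heven, Gp x ∈ Hodd)
    (hIGm : ∀ a ∈ Hodd, ∀ b : H, I (Gm a * b) = -I (a * Gm b))
    (hIGp : ∀ a ∈ Heven, ∀ b : H, I (Gp a * b) = I (a * Gp b))
    (hanti : Gm ∘ₗ Gp + Gp ∘ₗ Gm = 0) {a c : H} (ha : a ∈ Heven) (hc : c ∈ Heven) :
    I (a * Gm (Gp c)) = I (c * Gm (Gp a)) := by
  have hGpGm : Gp (Gm a) = -Gm (Gp a) := eq_neg_of_add_eq_zero_right (LinearMap.congr_fun hanti a)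
  rw [hcomm a ha _ (hGm _ (hGp c hc)), hIGm _ (hGp c hc), hIGp c hc, hGpGm, mul_neg, map_neg,
    neg_neg]

end Pairing

section FourPoint

variable {H : Type*} [Ring H] [Algebra ℂ H] {I : H →ₗ[ℂ] ℂ} {Gm Gp : H →ₗ[ℂ] H}

theorem Wfun_swap_middle {x y z w : H} (h : z * y = y * z) :
    Wfun I Gm Gp x z y w = Wfun I Gm Gp x y z w := by
  unfold Wfun
  rw [h]
  ring

theorem Wfun_swap_last {x y z w : H} (h : w * z = z * w) :
    Wfun I Gm Gp x y w z = Wfun I Gm Gp x y z w := by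
  unfold Wfun
  rw [h]
  ring

theorem Wfun_swap_first {S : Submodule ℂ H} (hmul : ∀ a ∈ S, ∀ b ∈ S, a * b ∈ S)
    (hpair : ∀ a ∈ S, ∀ c ∈ S, I (a * Gm (Gp c)) = I (c * Gm (Gp a)))
    {x y z w : H} (hx : x ∈ S) (hy : y ∈ S) (hz : z ∈ S) (hw : w ∈ S) (h : y * x = x * y) :
    Wfun I Gm Gp y x z w = Wfun I Gm Gp x y z w := by
  unfold Wfun
  rw [h, hpair _ (hmul y hy z hz) _ (hmul x hx w hw), hpair _ (hmul y hy w hw) _ (hmul x hx z hz)]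
  ring

end FourPoint

theorem stmt_13_general
    {H : Type*} [Ring H] [Algebra ℂ H]
    (Heven Hodd : Submodule ℂ H)
    (hmul_ee : ∀ a ∈ Heven, ∀ b ∈ Heven, a * b ∈ Heven)
    (hsc_ee : ∀ a ∈ Heven, ∀ b ∈ Heven, a * b = b * a)
    (Q Gm : H →ₗ[ℂ] H)
    (hGmo' : ∀ x ∈ Hodd, Gm x ∈ Heven)
    (hGm2 : Gm ∘ₗ Gm = 0) (hQGm : Q ∘ₗ Gm + Gm ∘ₗ Q = 0)
    (H0 H4 : Submodule ℂ H) (hHodge : IsCompl H0 H4)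
    (hGmH0 : ∀ x ∈ H0, Gm x = 0)
    {ι : Type*} (e : ι → H)
    (b : Module.Basis (ι × Fin 4) ℂ H4)
    (hb0 : ∀ α, (b (α, 0) : H) = e α)
    (hb1 : ∀ α, (b (α, 1) : H) = Q (e α))
    (hb2 : ∀ α, (b (α, 2) : H) = Gm (e α))
    (hb3 : ∀ α, (b (α, 3) : H) = Q (Gm (e α)))
    (Gp : H →ₗ[ℂ] H)
    (hGpo : ∀ x ∈ Heven, Gp x ∈ Hodd)
    (hGpH0 : ∀ x ∈ H0, Gp x = 0)
    (hGpe : ∀ α, Gp (e α) = 0)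
    (hGpGme : ∀ α, Gp (Gm (e α)) = 0)
    (hGpQe : ∀ α, Gp (Q (e α)) = e α)
    (hGpQGme : ∀ α, Gp (Q (Gm (e α))) = Gm (e α))
    (I : H →ₗ[ℂ] ℂ)
    (hIGm_o : ∀ a ∈ Hodd, ∀ b : H, I (Gm a * b) = - I (a * Gm b))
    (hIGp_e : ∀ a ∈ Heven, ∀ b : H, I (Gp a * b) = I (a * Gp b))
    :
    ∀ w : Fin 4 → H, (∀ i, w i ∈ Heven) →
      ∀ σ : Equiv.Perm (Fin 4),
        Wfun I Gm Gp (w (σ 0)) (w (σ 1)) (w (σ 2)) (w (σ 3)) =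
          Wfun I Gm Gp (w 0) (w 1) (w 2) (w 3) := by
  intro w hw σ
  have hanti := anticomm_of_hodge hGm2 hQGm hHodge hGmH0 hGpH0 e b hb0 hb1 hb2 hb3
    hGpe hGpGme hGpQe hGpQGme
  have hpair : ∀ a ∈ Heven, ∀ c ∈ Heven, I (a * Gm (Gp c)) = I (c * Gm (Gp a)) :=
    fun a ha c hc ↦ integral_mul_Gm_Gp_symm hsc_ee hGmo' hGpo hIGm_o hIGp_e hanti ha hc
  let W : (Fin 4 → Heven) → ℂ := fun v ↦ Wfun I Gm Gp (v 0) (v 1) (v 2) (v 3)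
  have hW : ∀ v (i : Fin 3), W (v ∘ swap i.castSucc i.succ) = W v := by
    intro v i
    have hcomm : ∀ j k, (v j : H) * v k = v k * v j := fun j k ↦ hsc_ee _ (v j).2 _ (v k).2
    fin_cases i
    · exact Wfun_swap_first hmul_ee hpair (v 0).2 (v 1).2 (v 2).2 (v 3).2 (hcomm 1 0)
    · exact Wfun_swap_middle (hcomm 2 1)
    · exact Wfun_swap_last (hcomm 3 2)
  exact comp_perm_invariant_of_swap_castSucc_succ W hW σ fun i ↦ ⟨w i, hw i⟩

theorem stmt_13
    {H : Type*} [Ring H] [Algebra ℂ H]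
    (Heven Hodd : Submodule ℂ H) (hgr : IsCompl Heven Hodd)
    (h1e : (1 : H) ∈ Heven)
    (hmul_ee : ∀ a ∈ Heven, ∀ b ∈ Heven, a * b ∈ Heven)
    (hmul_eo : ∀ a ∈ Heven, ∀ b ∈ Hodd, a * b ∈ Hodd)
    (hmul_oe : ∀ a ∈ Hodd, ∀ b ∈ Heven, a * b ∈ Hodd)
    (hmul_oo : ∀ a ∈ Hodd, ∀ b ∈ Hodd, a * b ∈ Heven)
    (hsc_ee : ∀ a ∈ Heven, ∀ b ∈ Heven, a * b = b * a)
    (hsc_eo : ∀ a ∈ Heven, ∀ b ∈ Hodd, a * b = b * a)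
    (hsc_oo : ∀ a ∈ Hodd, ∀ b ∈ Hodd, a * b = -(b * a))
    (Q Gm : H →ₗ[ℂ] H)
    (hQo : ∀ x ∈ Heven, Q x ∈ Hodd) (hQo' : ∀ x ∈ Hodd, Q x ∈ Heven)
    (hGmo : ∀ x ∈ Heven, Gm x ∈ Hodd) (hGmo' : ∀ x ∈ Hodd, Gm x ∈ Heven)
    (hQ2 : Q ∘ₗ Q = 0) (hGm2 : Gm ∘ₗ Gm = 0) (hQGm : Q ∘ₗ Gm + Gm ∘ₗ Q = 0)
    (H0 H4 : Submodule ℂ H) (hHodge : IsCompl H0 H4)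
    (hQH0 : ∀ x ∈ H0, Q x = 0) (hGmH0 : ∀ x ∈ H0, Gm x = 0)
    {ι : Type*} (e : ι → H)
    (he_hom : ∀ α, e α ∈ Heven ∨ e α ∈ Hodd)
    (b : Module.Basis (ι × Fin 4) ℂ H4)
    (hb0 : ∀ α, (b (α, 0) : H) = e α)
    (hb1 : ∀ α, (b (α, 1) : H) = Q (e α))
    (hb2 : ∀ α, (b (α, 2) : H) = Gm (e α))
    (hb3 : ∀ α, (b (α, 3) : H) = Q (Gm (e α)))
    (Gp : H →ₗ[ℂ] H)
    (hGpo : ∀ x ∈ Heven, Gp x ∈ Hodd) (hGpo' : ∀ x ∈ Hodd, Gp x ∈ Heven)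
    (hGpH0 : ∀ x ∈ H0, Gp x = 0)
    (hGpe : ∀ α, Gp (e α) = 0)
    (hGpGme : ∀ α, Gp (Gm (e α)) = 0)
    (hGpQe : ∀ α, Gp (Q (e α)) = e α)
    (hGpQGme : ∀ α, Gp (Q (Gm (e α))) = Gm (e α))
    (I : H →ₗ[ℂ] ℂ) (hIeven : ∀ x ∈ Hodd, I x = 0)
    (hIGm_e : ∀ a ∈ Heven, ∀ b : H, I (Gm a * b) = I (a * Gm b))
    (hIGm_o : ∀ a ∈ Hodd, ∀ b : H, I (Gm a * b) = - I (a * Gm b))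
    (hIGp_e : ∀ a ∈ Heven, ∀ b : H, I (Gp a * b) = I (a * Gp b))
    (hIGp_o : ∀ a ∈ Hodd, ∀ b : H, I (Gp a * b) = - I (a * Gp b))
    :
    ∀ w : Fin 4 → H, (∀ i, w i ∈ Heven) →
      ∀ σ : Equiv.Perm (Fin 4),
        Wfun I Gm Gp (w (σ 0)) (w (σ 1)) (w (σ 2)) (w (σ 3)) =
          Wfun I Gm Gp (w 0) (w 1) (w 2) (w 3) :=
  stmt_13_general Heven Hodd hmul_ee hsc_ee Q Gm hGmo' hGm2 hQGm H0 H4 hHodge hGmH0 e b hb0 hb1 hb2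
    hb3 Gp hGpo hGpH0 hGpe hGpGme hGpQe hGpQGme I hIGm_o hIGp_e
end
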